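/- If S is a nearly Gorenstein numerical semigroup with embedding dimension 4, then S satisfies Wilf's inequality: F(S) + 1 ≤ n(S) · ν(S), where n(S) is the number of elements of S that are ≤ F(S) and ν(S) = 4 is the embedding dimension. -/

import Mathlib

/-- A numerical semigroup: a subset of ℕ containing 0, closed under addition,
with finite complement. -/
def IsNumSgp (S : Set ℕ) : Prop :=
  0 ∈ S ∧ (∀ a ∈ S, ∀ b ∈ S, a + b ∈ S) ∧ (Sᶜ : Set ℕ).Finite

/-- An integer belongs to (the image in ℤ of) S. -/
def memZ (S : Set ℕ) (z : ℤ) : Prop := ∃ s ∈ S, (s : ℤ) = z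

/-- F is the Frobenius number of S: the largest natural number not in S. -/
def IsFrob (S : Set ℕ) (F : ℕ) : Prop := F ∉ S ∧ ∀ n, F < n → n ∈ S

/-- The set of pseudo-Frobenius numbers of S. -/
def PF (S : Set ℕ) : Set ℕ := {f | f ∉ S ∧ ∀ s ∈ S, s ≠ 0 → f + s ∈ S}

/-- n is a minimal generator of S. -/
def IsMinGen (S : Set ℕ) (n : ℕ) : Prop :=
  n ∈ S ∧ n ≠ 0 ∧ ¬∃ a ∈ S, ∃ b ∈ S, a ≠ 0 ∧ b ≠ 0 ∧ a + b = n

/-- S is almost symmetric (Nari): F - f ∈ PF(S) for every f ∈ PF(S). -/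
def AlmostSym (S : Set ℕ) (F : ℕ) : Prop :=
  ∀ f ∈ PF S, ∃ g ∈ PF S, (g : ℤ) = (F : ℤ) - (f : ℤ)

/-- S is symmetric: PF(S) = {F(S)} (vacuously true when S = ℕ). -/
def IsSym (S : Set ℕ) : Prop := ∀ F, IsFrob S F → PF S = {F}

/-- (f_1,...,f_ν) is an NG-vector for S with minimal generators n_1,...,n_ν. -/
def IsNGVector {ν : ℕ} (S : Set ℕ) (n f : Fin ν → ℕ) : Prop :=
  ∀ i, f i ∈ PF S ∧ ∀ g ∈ PF S, memZ S ((n i : ℤ) + (f i : ℤ) - (g : ℤ))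

/-- S is nearly Gorenstein (generator criterion): for each minimal generator m
there is f ∈ PF(S) with m + f - g ∈ S for all g ∈ PF(S). -/
def NearlyGGen (S : Set ℕ) : Prop :=
  ∀ m, IsMinGen S m → ∃ f ∈ PF S, ∀ g ∈ PF S, memZ S ((m : ℤ) + (f : ℤ) - (g : ℤ))

/-- The canonical ideal K(S) = {z ∈ ℤ : F - z ∉ S}. -/
def Kan (S : Set ℕ) (F : ℕ) : Set ℤ := {z | ¬ memZ S ((F : ℤ) - z)}

/-- The relative ideal (S - K(S)) = {z ∈ ℤ : z + K(S) ⊆ S}. -/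
def SmK (S : Set ℕ) (F : ℕ) : Set ℤ := {z | ∀ k ∈ Kan S F, memZ S (z + k)}

/-- S is nearly Gorenstein: M(S) ⊆ K(S) + (S - K(S)). -/
def NearlyG (S : Set ℕ) (F : ℕ) : Prop :=
  ∀ m ∈ S, m ≠ 0 → ∃ k ∈ Kan S F, ∃ x ∈ SmK S F, k + x = (m : ℤ)

/-! Let `e` be the multiplicity of `S`. It is a minimal generator, so the NG-vector gives
`f ∈ PF(S)` with `e + f - g ∈ S` for all `g ∈ PF(S)`; taking `g = F` forces `f = F`. Hence
`F + e - g ∈ S` for every pseudo-Frobenius number `g`, and since every gap lies below a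
pseudo-Frobenius number by an element of `S`, `F + e - x ∈ S` for every gap `x`.

With `m = |S ∩ [1, F]| = n(S) - 1`, the reflection `x ↦ F + e - x` injects the `F - m` gaps into
`S ∩ [e, F + e]`, so `F ≤ 2m + e`; it also injects the gaps in `[e, 2e)` into `S ∩ [1, F]`, while
the elements of `S` in `[e, 2e)` are minimal generators, so `e ≤ m + 4`. Together
`F + 1 ≤ 4(m + 1)`, except when `m = 0`, where `F < e ≤ 4` directly. -/

open Set

def IsMultiplicity (S : Set ℕ) (e : ℕ) : Prop :=
  e ∈ S ∧ e ≠ 0 ∧ ∀ s ∈ S, s ≠ 0 → e ≤ s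

theorem Set.ncard_range_le {ι α : Type*} [Finite ι] (f : ι → α) :
    (range f).ncard ≤ Nat.card ι :=
  Finite.card_range_le f

section

variable {S : Set ℕ} {F e : ℕ}

theorem IsFrob.le_of_notMem (hF : IsFrob S F) {x : ℕ} (hx : x ∉ S) : x ≤ F :=
  not_lt.1 fun h => hx (hF.2 x h)

theorem IsFrob.mem_PF (hF : IsFrob S F) : F ∈ PF S :=
  ⟨hF.1, fun _ _ _ => hF.2 _ (by omega)⟩

theorem IsFrob.exists_isMultiplicity (hF : IsFrob S F) : ∃ e, IsMultiplicity S e := by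
  classical
  have h : ∃ s, s ∈ S ∧ s ≠ 0 := ⟨F + 1, hF.2 _ F.lt_succ_self, F.succ_ne_zero⟩
  exact ⟨Nat.find h, (Nat.find_spec h).1, (Nat.find_spec h).2,
    fun s hs hs0 => Nat.find_min' h ⟨hs, hs0⟩⟩

theorem exists_PF_eq_add_of_notMem (h0 : 0 ∈ S) (hadd : ∀ a ∈ S, ∀ b ∈ S, a + b ∈ S)
    (hF : IsFrob S F) {x : ℕ} (hx : x ∉ S) : ∃ g ∈ PF S, ∃ s ∈ S, x + s = g := by
  induction hd : F - x using Nat.strong_induction_on generalizing x with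
  | _ d ih =>
    by_cases hxPF : x ∈ PF S
    · exact ⟨x, hxPF, 0, h0, rfl⟩
    obtain ⟨s, hs, hs0, hxs⟩ : ∃ s ∈ S, s ≠ 0 ∧ x + s ∉ S := by
      simpa [PF, hx] using hxPF
    have := hF.le_of_notMem hxs
    obtain ⟨g, hg, t, ht, rfl⟩ := ih _ (by omega) hxs rfl
    exact ⟨_, hg, s + t, hadd s hs t ht, (add_assoc x s t).symm⟩

theorem IsMultiplicity.isMinGen_of_lt_two_mul (he : IsMultiplicity S e) {z : ℕ} (hz : z ∈ S)
    (hez : e ≤ z) (hz2 : z < 2 * e) : IsMinGen S z := by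
  refine ⟨hz, by have := he.2.1; omega, ?_⟩
  rintro ⟨a, ha, b, hb, ha0, hb0, rfl⟩
  have := he.2.2 a ha ha0
  have := he.2.2 b hb hb0
  omega

theorem IsMultiplicity.isMinGen (he : IsMultiplicity S e) : IsMinGen S e :=
  he.isMinGen_of_lt_two_mul he.1 le_rfl (by have := he.2.1; omega)

theorem IsMultiplicity.frob_lt_of_ncard_Icc_inter_eq_zero (he : IsMultiplicity S e)
    (h : (Icc 1 F ∩ S).ncard = 0) : F < e := by
  by_contra! heF
  rw [ncard_eq_zero ((finite_Icc 1 F).inter_of_left S)] at h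
  exact h.subset ⟨⟨Nat.one_le_iff_ne_zero.2 he.2.1, heF⟩, he.1⟩

theorem IsMultiplicity.eq_frob_of_memZ (he : IsMultiplicity S e) (hF : IsFrob S F) {f : ℕ}
    (hf : f ∈ PF S) (h : memZ S (e + f - F)) : f = F := by
  obtain ⟨s, hs, hsf⟩ := h
  have := hF.le_of_notMem hf.1
  -- `s = e + f - F ≤ e`, and `s = 0` would put `F = f + e` in `S`
  rcases eq_or_ne s 0 with rfl | hs0
  · have hfe : f + e = F := by omega
    exact absurd (hfe ▸ hf.2 e he.1 he.2.1) hF.1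
  · have := he.2.2 s hs hs0
    omega

theorem IsMultiplicity.frob_add_sub_mem_of_PF (he : IsMultiplicity S e) (hF : IsFrob S F)
    {f : ℕ} (hf : f ∈ PF S) (hfe : ∀ g ∈ PF S, memZ S (e + f - g)) {g : ℕ} (hg : g ∈ PF S) :
    F + e - g ∈ S := by
  obtain rfl : f = F := he.eq_frob_of_memZ hF hf (hfe F hF.mem_PF)
  obtain ⟨s, hs, hsg⟩ := hfe g hg
  have := hF.le_of_notMem hg.1
  convert hs using 1
  omega

theorem frob_add_sub_mem_of_notMem (h0 : 0 ∈ S) (hadd : ∀ a ∈ S, ∀ b ∈ S, a + b ∈ S)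
    (hF : IsFrob S F) {k : ℕ} (hk : ∀ g ∈ PF S, F + k - g ∈ S) {x : ℕ} (hx : x ∉ S) :
    F + k - x ∈ S := by
  obtain ⟨g, hg, s, hs, rfl⟩ := exists_PF_eq_add_of_notMem h0 hadd hF hx
  have := hF.le_of_notMem hg.1
  convert hadd _ (hk _ hg) s hs using 1
  omega

theorem ncard_setOf_mem_and_le (h0 : 0 ∈ S) :
    {s | s ∈ S ∧ s ≤ F}.ncard = (Icc 1 F ∩ S).ncard + 1 := by
  have : {s | s ∈ S ∧ s ≤ F} = insert 0 (Icc 1 F ∩ S) := by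
    ext (_ | x) <;> simp [h0, and_comm]
  rw [this, ncard_insert_of_notMem (by simp) ((finite_Icc 1 F).inter_of_left S)]

theorem ncard_Icc_inter_add_ncard_compl (h0 : 0 ∈ S) (hF : IsFrob S F) :
    (Icc 1 F ∩ S).ncard + Sᶜ.ncard = F := by
  have hgaps : Icc 1 F \ S = Sᶜ := by
    rw [sdiff_eq_compl_inter, inter_eq_left]
    exact fun x hx => ⟨Nat.one_le_iff_ne_zero.2 (by rintro rfl; exact hx h0), hF.le_of_notMem hx⟩
  rw [← hgaps, ncard_inter_add_ncard_sdiff_eq_ncard _ _ (finite_Icc 1 F), ncard_Icc_nat,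
    Nat.add_sub_cancel]

theorem ncard_compl_le_ncard_Icc_inter_add (hF : IsFrob S F) {k : ℕ} (hk0 : k ≠ 0)
    (hk : ∀ x ∉ S, F + k - x ∈ S) : Sᶜ.ncard ≤ (Icc 1 F ∩ S).ncard + k := by
  calc Sᶜ.ncard ≤ ((Icc 1 F ∩ S) ∪ Ioc F (F + k)).ncard := by
        refine ncard_le_ncard_of_injOn (F + k - ·) (fun x hx => ?_) (fun x hx y hy hxy => ?_)
          (((finite_Icc 1 F).inter_of_left S).union (finite_Ioc _ _))
        · have := hF.le_of_notMem hx
          by_cases hxk : k ≤ x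
          · exact Or.inl ⟨⟨by omega, by omega⟩, hk x hx⟩
          · exact Or.inr ⟨by omega, by omega⟩
        · have := hF.le_of_notMem hx
          have := hF.le_of_notMem hy
          simp only at hxy
          omega
    _ ≤ (Icc 1 F ∩ S).ncard + (Ioc F (F + k)).ncard := ncard_union_le _ _
    _ = (Icc 1 F ∩ S).ncard + k := by rw [ncard_Ioc_nat]; omega

theorem IsMultiplicity.le_ncard_Icc_inter_add {ν : ℕ} {n : Fin ν → ℕ} (he : IsMultiplicity S e)
    (hF : IsFrob S F) (hk : ∀ x ∉ S, F + e - x ∈ S) (hgen : ∀ m, IsMinGen S m → ∃ i, n i = m) :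
    e ≤ (Icc 1 F ∩ S).ncard + ν := by
  have hgens : (Ico e (2 * e) ∩ S).ncard ≤ ν :=
    calc (Ico e (2 * e) ∩ S).ncard ≤ (range n).ncard :=
          ncard_le_ncard (fun z ⟨⟨hez, hz2⟩, hz⟩ => hgen z (he.isMinGen_of_lt_two_mul hz hez hz2))
            (finite_range n)
      _ ≤ ν := (ncard_range_le n).trans_eq (Nat.card_fin ν)
  have hgaps : (Ico e (2 * e) \ S).ncard ≤ (Icc 1 F ∩ S).ncard := by
    refine ncard_le_ncard_of_injOn (F + e - ·) (fun x ⟨⟨hex, hx2⟩, hx⟩ => ?_)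
      (fun x hx y hy hxy => ?_) ((finite_Icc 1 F).inter_of_left S)
    · have := hF.le_of_notMem hx
      have := he.2.1
      exact ⟨⟨by omega, by omega⟩, hk x hx⟩
    · have := hF.le_of_notMem hx.2
      have := hF.le_of_notMem hy.2
      simp only at hxy
      omega
  have := ncard_inter_add_ncard_sdiff_eq_ncard (Ico e (2 * e)) S
  rw [ncard_Ico_nat] at this
  omega

end

theorem stmt19_general (S : Set ℕ) (F : ℕ) (n : Fin 4 → ℕ)
    (hS : IsNumSgp S) (hF : IsFrob S F)
    (hgen : ∀ m, IsMinGen S m ↔ ∃ i, n i = m)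
    (hNG : ∃ f : Fin 4 → ℕ, IsNGVector S n f) :
    F + 1 ≤ (Set.ncard {s : ℕ | s ∈ S ∧ s ≤ F}) * 4 := by
  obtain ⟨h0, hadd, -⟩ := hS
  obtain ⟨e, he⟩ := hF.exists_isMultiplicity
  obtain ⟨f, hf⟩ := hNG
  obtain ⟨i, hi⟩ := (hgen e).1 he.isMinGen
  have hrefl : ∀ x ∉ S, F + e - x ∈ S := fun _ =>
    frob_add_sub_mem_of_notMem h0 hadd hF
      fun _ => he.frob_add_sub_mem_of_PF hF (hf i).1 (hi ▸ (hf i).2)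
  have hcount := ncard_Icc_inter_add_ncard_compl h0 hF
  have hgaps := ncard_compl_le_ncard_Icc_inter_add hF he.2.1 hrefl
  have hmult := he.le_ncard_Icc_inter_add hF hrefl fun m => (hgen m).1
  have hsmall := he.frob_lt_of_ncard_Icc_inter_eq_zero (F := F)
  rw [ncard_setOf_mem_and_le h0]
  omega

theorem stmt19 (S : Set ℕ) (F : ℕ) (n : Fin 4 → ℕ)
    (hS : IsNumSgp S) (hF : IsFrob S F) (hmono : StrictMono n)
    (hgen : ∀ m, IsMinGen S m ↔ ∃ i, n i = m)
    (hNG : ∃ f : Fin 4 → ℕ, IsNGVector S n f) :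
    F + 1 ≤ (Set.ncard {s : ℕ | s ∈ S ∧ s ≤ F}) * 4 :=
  stmt19_general S F n hS hF hgen hNG
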